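/- Suppose positive reals a_1, ..., a_K and rates R_1, ..., R_K > 0 satisfy a_{n-1} ≥ a_n · 2^{R_n}(2^{R_{n-1}} - 1)/(2^{R_n} - 1) for all n = 2, ..., K. Then for every n = 1, ..., K-1, a_n - (2^{R_n} - 1) ∑_{l=n+1}^K a_l ≥ a_n · ∏_{m=n+1}^K 2^{-R_m} > 0. -/

import Mathlib

/-!
Write `xₙ = 2^{Rₙ}`, `Aₙ = ∑_{l>n} a_l` and `Pₙ = ∏_{m>n} xₘ⁻¹`. The claim is the invariant
`(xₙ - 1) Aₙ ≤ aₙ (1 - Pₙ)`, proved by downward induction from `n = K`, where both sides vanish.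
Given it at `n + 1`, `Aₙ = aₙ₊₁ + Aₙ₊₁ ≤ aₙ₊₁ (xₙ₊₁ - Pₙ₊₁) / (xₙ₊₁ - 1)`, and the well-behavedness
condition `aₙ₊₁ xₙ₊₁ (xₙ - 1) ≤ aₙ (xₙ₊₁ - 1)` turns `(xₙ - 1)` times this into
`aₙ (1 - Pₙ₊₁ / xₙ₊₁) = aₙ (1 - Pₙ)`.
-/

open Finset

theorem sub_one_mul_add_le_of_wellBehaved {s t a b A P : ℝ} (hs : 1 ≤ s) (ht : 1 < t)
    (hP : P ≤ 1) (hA : (t - 1) * A ≤ b * (1 - P)) (hab : b * t * (s - 1) ≤ a * (t - 1)) :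
    (s - 1) * (b + A) ≤ a * (1 - t⁻¹ * P) := by
  have ht0 : 0 < t := by linarith
  have key : (s - 1) * (b + A) * (t * (t - 1)) ≤ a * (1 - t⁻¹ * P) * (t * (t - 1)) :=
    calc (s - 1) * (b + A) * (t * (t - 1))
        = (s - 1) * t * (b * (t - 1)) + (s - 1) * t * ((t - 1) * A) := by ring
      _ ≤ (s - 1) * t * (b * (t - 1)) + (s - 1) * t * (b * (1 - P)) := by gcongr
      _ = b * t * (s - 1) * (t - P) := by ring
      _ ≤ a * (t - 1) * (t - P) := by gcongr; linarith
      _ = a * (1 - t⁻¹ * P) * (t * (t - 1)) := by field_simp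
  exact le_of_mul_le_mul_right key (mul_pos ht0 (sub_pos.2 ht))

theorem sub_one_mul_sum_Icc_le_of_wellBehaved {x a : ℕ → ℝ} {n K : ℕ} (hnK : n ≤ K)
    (hx : ∀ m ∈ Icc n K, 1 < x m)
    (hwb : ∀ m ∈ Ico n K, a (m + 1) * x (m + 1) * (x m - 1) ≤ a m * (x (m + 1) - 1)) :
    (x n - 1) * ∑ l ∈ Icc (n + 1) K, a l ≤ a n * (1 - ∏ m ∈ Icc (n + 1) K, (x m)⁻¹) := by
  induction hnK using Nat.decreasingInduction with
  | self => simp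
  | of_succ k hk ih =>
    have hx' : ∀ m ∈ Icc (k + 1) K, 1 < x m := fun m hm =>
      hx m (Icc_subset_Icc_left k.le_succ hm)
    have hwb' : ∀ m ∈ Ico (k + 1) K, _ := fun m hm =>
      hwb m (Ico_subset_Ico_left k.le_succ hm)
    have hP : ∏ m ∈ Icc (k + 1 + 1) K, (x m)⁻¹ ≤ 1 := by
      have hx'' : ∀ m ∈ Icc (k + 1 + 1) K, 1 < x m := fun m hm =>
        hx' m (Icc_subset_Icc_left (k + 1).le_succ hm)
      exact prod_le_one (fun m hm => (inv_pos.2 (one_pos.trans (hx'' m hm))).le)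
        fun m hm => inv_le_one_of_one_le₀ (hx'' m hm).le
    have hnotmem : k + 1 ∉ Icc (k + 1 + 1) K := by simp
    rw [← insert_Icc_add_one_left_eq_Icc hk, sum_insert hnotmem, prod_insert hnotmem]
    exact sub_one_mul_add_le_of_wellBehaved (hx k (mem_Icc.2 ⟨le_rfl, hk.le⟩)).le
      (hx' (k + 1) (mem_Icc.2 ⟨le_rfl, hk⟩)) hP (ih hx' hwb') (hwb k (mem_Ico.2 ⟨le_rfl, hk⟩))

theorem stmt_5 (K : ℕ) (R a : ℕ → ℝ)
    (hR : ∀ n ∈ Finset.Icc 1 K, 0 < R n)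
    (ha : ∀ n ∈ Finset.Icc 1 K, 0 < a n)
    (hwb : ∀ n ∈ Finset.Icc 2 K,
      a (n - 1) ≥ a n * (2 : ℝ) ^ (R n) * ((2 : ℝ) ^ (R (n - 1)) - 1) / ((2 : ℝ) ^ (R n) - 1)) :
    ∀ n : ℕ, 1 ≤ n → n ≤ K - 1 →
      a n - ((2 : ℝ) ^ (R n) - 1) * (∑ l ∈ Finset.Icc (n + 1) K, a l) ≥
          a n * ∏ m ∈ Finset.Icc (n + 1) K, (2 : ℝ) ^ (-R m) ∧
        0 < a n * ∏ m ∈ Finset.Icc (n + 1) K, (2 : ℝ) ^ (-R m) := by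
  intro n hn hnK
  have hx : ∀ m ∈ Icc n K, 1 < (2 : ℝ) ^ R m := fun m hm =>
    Real.one_lt_rpow one_lt_two (hR m (Icc_subset_Icc_left hn hm))
  have hwb' : ∀ m ∈ Ico n K, a (m + 1) * 2 ^ R (m + 1) * (2 ^ R m - 1) ≤
      a m * ((2 : ℝ) ^ R (m + 1) - 1) := fun m hm => by
    simp only [mem_Ico] at hm
    have hx1 := hx (m + 1) (mem_Icc.2 ⟨by omega, by omega⟩)
    simpa [div_le_iff₀ (sub_pos.2 hx1)] using hwb (m + 1) (mem_Icc.2 ⟨by omega, by omega⟩)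
  have hinv : ∀ m, (2 : ℝ) ^ (-R m) = ((2 : ℝ) ^ R m)⁻¹ := fun m =>
    Real.rpow_neg zero_le_two _
  simp only [hinv]
  refine ⟨?_, mul_pos (ha n (mem_Icc.2 ⟨by omega, by omega⟩)) (prod_pos fun m _ => by positivity)⟩
  linarith [sub_one_mul_sum_Icc_le_of_wellBehaved (by omega) hx hwb']
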